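/- arXiv:2101.02786 — 2 statements merged into one kernel-verified Lean document; each statement's English description precedes it below -/
import Mathlib

section
/- Let M be a positive integer, let R² be a real number with 0 < R² ≤ 1, and let K be a real number satisfying K > max(M + 2, M/R² + 2). Then (1 − R²)·(1 + M/(K − M − 2)) < 1. -/
/-- lower bound on the number of ensembles `K` guaranteeing variance reduction
for the ensemble control variate (and ACV-IS) estimator: if `K > max(M + 2, M/R² + 2)`,
then the variance-reduction ratio `(1 − R²)(1 + M/(K − M − 2))` is below `1`. -/
theorem ensemble_cv_variance_reduction_bound
    (M : ℕ) (hM : 0 < M) (R2 : ℝ) (hR2₀ : 0 < R2) (hR2₁ : R2 ≤ 1)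
    (K : ℝ) (hK : max ((M : ℝ) + 2) ((M : ℝ) / R2 + 2) < K) :
    (1 - R2) * (1 + (M : ℝ) / (K - M - 2)) < 1 := by
  have h1 : (M : ℝ) + 2 < K := lt_of_le_of_lt (le_max_left _ _) hK
  have h2 : (M : ℝ) / R2 + 2 < K := lt_of_le_of_lt (le_max_right _ _) hK
  have hD : (0 : ℝ) < K - M - 2 := by linarith
  have hDR : (M : ℝ) / R2 - M < K - M - 2 := by linarith
  have hkey : (1 - R2) * (M : ℝ) < R2 * (K - M - 2) := by
    have : (M : ℝ) / R2 * R2 = M := div_mul_cancel₀ _ (ne_of_gt hR2₀)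
    nlinarith [mul_lt_mul_of_pos_right hDR hR2₀]
  have : (1 - R2) * (1 + (M : ℝ) / (K - M - 2)) =
      ((1 - R2) * ((K - M - 2) + M)) / (K - M - 2) := by
    field_simp
  rw [this, div_lt_one hD]
  nlinarith
end

section
/- Let M be a positive integer, let r > 1 and let R² be a real number with 0 < R² ≤ 1, and let K be a real number satisfying K > max(M + 2, ((r−1)/r)·(M/R²) + M/r + 2). Then (1 − R²)·(1 + ((r−1)/r)·M/(K − M − 2)) < 1. -/
/-- lower bound on the number of ensembles `K` guaranteeing variance reduction
for the ensemble ACV-MF estimator with common sample ratio `r`: if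
`K > max(M + 2, ((r−1)/r)(M/R²) + M/r + 2)`, then the variance-reduction ratio
`(1 − R²)(1 + ((r−1)/r) M/(K − M − 2))` is below `1`. -/
theorem ensemble_acv_mf_variance_reduction_bound
    (M : ℕ) (hM : 0 < M) (r : ℝ) (hr : 1 < r)
    (R2 : ℝ) (hR2₀ : 0 < R2) (hR2₁ : R2 ≤ 1)
    (K : ℝ)
    (hK : max ((M : ℝ) + 2) ((r - 1) / r * ((M : ℝ) / R2) + (M : ℝ) / r + 2) < K) :
    (1 - R2) * (1 + (r - 1) / r * (M : ℝ) / (K - M - 2)) < 1 := by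
  have hr0 : (0:ℝ) < r := lt_trans one_pos hr
  have h1 : (M : ℝ) + 2 < K := lt_of_le_of_lt (le_max_left _ _) hK
  have h2 : (r - 1) / r * ((M : ℝ) / R2) + (M : ℝ) / r + 2 < K :=
    lt_of_le_of_lt (le_max_right _ _) hK
  have hD : (0:ℝ) < K - M - 2 := by linarith
  have e : (r - 1) / r * ((M : ℝ) / R2) + (M : ℝ) / r + 2
      = ((r - 1) * M + M * R2 + 2 * r * R2) / (r * R2) := by
    field_simp
  rw [e, div_lt_iff₀ (mul_pos hr0 hR2₀)] at h2
  have key : (1 - R2) * ((r - 1) / r * (M : ℝ)) < R2 * (K - M - 2) := by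
    rw [show (1 - R2) * ((r - 1) / r * (M : ℝ)) = ((1 - R2) * ((r - 1) * M)) / r from by ring,
      div_lt_iff₀ hr0]
    nlinarith [h2]
  have h4 : (1 - R2) * (1 + (r - 1) / r * (M : ℝ) / (K - M - 2))
      = (1 - R2) + ((1 - R2) * ((r - 1) / r * (M : ℝ))) / (K - M - 2) := by
    field_simp
  rw [h4]
  have h5 : ((1 - R2) * ((r - 1) / r * (M : ℝ))) / (K - M - 2) < R2 :=
    (div_lt_iff₀ hD).mpr (by nlinarith [key])
  linarith
end
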